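/- arXiv:2507.16593 — 6 statements merged into one kernel-verified Lean document; each statement's English description precedes it below -/
import Mathlib

section
/- Let A ∈ PC_n with n ≥ 3, let w be a positive Perron eigenvector of A (Aw = rw with r the Perron eigenvalue), and let G_{A,w} be the digraph on vertices {1,…,n} with an edge (i,j) whenever i ≠ j and w_i/w_j ≥ a_{ij}. If i is a vertex and there exists k ≠ i with (k,i) not an edge of G_{A,w}, then there exists a vertex j with (j,i) an edge and (i,j) not an edge of G_{A,w}. -/
/-- The digraph `G_{A,w}`: edge `(i,j)` whenever `i ≠ j` and `w i / w j ≥ A i j`. -/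
def Edge {n : ℕ} (A : Matrix (Fin n) (Fin n) ℝ) (w : Fin n → ℝ) (i j : Fin n) : Prop :=
  i ≠ j ∧ A i j ≤ w i / w j

/-- if some edge `(k,i)` is missing in `G_{A,w}` (with `w` the Perron
eigenvector of the reciprocal matrix `A`, `n ≥ 3`), then there is `j` with `(j,i)` an
edge and `(i,j)` not an edge. -/
theorem exists_in_edge_not_out_edge (n : ℕ) (hn : 3 ≤ n)
    (A : Matrix (Fin n) (Fin n) ℝ)
    (hpos : ∀ i j, 0 < A i j)
    (hrec : ∀ i j, A i j = (A j i)⁻¹)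
    (r : ℝ) (w : Fin n → ℝ) (hw : ∀ i, 0 < w i)
    (heig : A.mulVec w = r • w)
    (i k : Fin n) (hk : k ≠ i) (hki : ¬ Edge A w k i) :
    ∃ j : Fin n, Edge A w j i ∧ ¬ Edge A w i j := by
  by_contra h
  push_neg at h
  -- row sums
  have hrow : ∀ m, (∑ j, A m j * w j) = r * w m := by
    intro m
    have := congrFun heig m
    simpa [Matrix.mulVec, dotProduct, smul_eq_mul] using this
  -- diagonal is 1
  have hdiag : ∀ m, A m m = 1 := by
    intro m
    have h1 := hrec m m
    have hp := hpos m m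
    have h2 : A m m * A m m = 1 := by
      nth_rewrite 1 [h1]
      exact inv_mul_cancel₀ (ne_of_gt hp)
    nlinarith
  -- every off-diagonal term satisfies A i j * w j ≤ w i
  have hle : ∀ j : Fin n, A i j * w j ≤ w i := by
    intro j
    by_cases hji : j = i
    · subst hji; rw [hdiag j]; simp
    · by_contra hcon
      push_neg at hcon  -- w i < A i j * w j
      have hedge_ji : Edge A w j i := by
        refine ⟨hji, ?_⟩
        rw [hrec j i, le_div_iff₀ (hw i)]
        have hinv : (A i j)⁻¹ * (A i j * w j) = w j := by
          field_simp
          exact mul_div_cancel_left₀ _ (hpos i j).ne'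
        nlinarith [mul_lt_mul_of_pos_left hcon (inv_pos.mpr (hpos i j))]
      have hedge_ij := h j hedge_ji
      have h3 : A i j ≤ w i / w j := hedge_ij.2
      rw [le_div_iff₀ (hw j)] at h3
      linarith
  -- strict at k
  have hstrict : A i k * w k < w i := by
    have hnot : ¬ (A k i ≤ w k / w i) := by
      intro hle'
      exact hki ⟨hk, hle'⟩
    push_neg at hnot
    rw [hrec k i, div_lt_iff₀ (hw i)] at hnot
    -- w k < (A i k)⁻¹ * w i
    have hinv : (A i k) * ((A i k)⁻¹ * w i) = w i := by
      field_simp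
      exact mul_div_cancel_left₀ _ (hpos i k).ne'
    nlinarith [mul_lt_mul_of_pos_left hnot (hpos i k)]
  -- so r < n
  have hrlt : r * w i < n * w i := by
    have := Finset.sum_lt_sum (fun j _ => hle j)
      ⟨k, Finset.mem_univ k, hstrict⟩
    rw [hrow i] at this
    simpa [Finset.sum_const, nsmul_eq_mul] using this
  have hrn : r < n := by
    have := hw i
    nlinarith
  -- but r ≥ n
  have key : ∀ a b : Fin n, 2 ≤ A a b * w b / w a + A b a * w a / w b := by
    intro a b
    have h1 : 0 < A a b * w b / w a := div_pos (mul_pos (hpos a b) (hw b)) (hw a)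
    have h2 : 0 < A b a * w a / w b := div_pos (mul_pos (hpos b a) (hw a)) (hw b)
    have h3 : A a b * w b / w a * (A b a * w a / w b) = 1 := by
      have hwa := (hw a).ne'
      have hwb := (hw b).ne'
      have hab := (hpos a b).ne'
      rw [hrec b a]
      field_simp
    nlinarith [sq_nonneg (A a b * w b / w a - 1)]
  have hsum : ∀ a : Fin n, (∑ b, A a b * w b / w a) = r := by
    intro a
    rw [← Finset.sum_div, hrow a]
    exact mul_div_cancel_right₀ r (hw a).ne'
  have hbig : (2 * n * n : ℝ) ≤ ∑ a : Fin n, ∑ b : Fin n, (A a b * w b / w a + A b a * w a / w b) := by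
    calc (2 * n * n : ℝ) = ∑ _a : Fin n, ∑ _b : Fin n, (2 : ℝ) := by
          simp [Finset.sum_const, nsmul_eq_mul]; ring
      _ ≤ _ := by
          apply Finset.sum_le_sum
          intro a _
          exact Finset.sum_le_sum (fun b _ => key a b)
  have heq : (∑ a : Fin n, ∑ b : Fin n, (A a b * w b / w a + A b a * w a / w b))
      = 2 * (n * r) := by
    have h1 : (∑ a : Fin n, ∑ b : Fin n, A a b * w b / w a) = n * r := by
      simp [hsum, Finset.sum_const, nsmul_eq_mul]
    have h2 : (∑ a : Fin n, ∑ b : Fin n, A b a * w a / w b) = n * r := by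
      rw [Finset.sum_comm]
      exact h1
    calc (∑ a : Fin n, ∑ b : Fin n, (A a b * w b / w a + A b a * w a / w b))
        = (∑ a : Fin n, ∑ b : Fin n, A a b * w b / w a)
          + (∑ a : Fin n, ∑ b : Fin n, A b a * w a / w b) := by
          rw [← Finset.sum_add_distrib]
          congr 1
          ext a
          rw [← Finset.sum_add_distrib]
      _ = 2 * (n * r) := by rw [h1, h2]; ring
  rw [heq] at hbig
  have hn0 : (0 : ℝ) < n := by positivity
  nlinarith
end

section
/- Let A ∈ PC_n with n ≥ 3 and let w be its Perron eigenvector. Then the digraph G_{A,w} has no source vertex, i.e., there is no vertex i such that for every j ≠ i the edge (i,j) is in G_{A,w} and no edge (j,i) is in G_{A,w}. -/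
/-- for a reciprocal matrix `A` with `n ≥ 3` and its Perron eigenvector
`w`, the digraph `G_{A,w}` has no source vertex. -/
theorem no_source (n : ℕ) (hn : 3 ≤ n)
    (A : Matrix (Fin n) (Fin n) ℝ)
    (hpos : ∀ i j, 0 < A i j)
    (hrec : ∀ i j, A i j = (A j i)⁻¹)
    (r : ℝ) (w : Fin n → ℝ) (hw : ∀ i, 0 < w i)
    (heig : A.mulVec w = r • w) :
    ¬ ∃ i : Fin n, (∀ j : Fin n, j ≠ i → Edge A w i j) ∧ (∀ j : Fin n, ¬ Edge A w j i) := by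
  rintro ⟨i, hout, hin⟩
  have hAdiag : ∀ k, A k k = 1 := by
    intro k
    have h := hrec k k
    have hk := hpos k k
    have h2 : A k k * A k k = 1 := by
      nth_rewrite 1 [h]
      exact inv_mul_cancel₀ (ne_of_gt hk)
    nlinarith
  have hrow : ∀ k, ∑ j, A k j * w j = r * w k := by
    intro k
    have := congrFun heig k
    simpa [Matrix.mulVec, dotProduct] using this
  -- r ≥ n
  have hSrow : ∀ k, ∑ j, A k j * w j / w k = r := by
    intro k
    rw [← Finset.sum_div, hrow k, mul_div_assoc, div_self (ne_of_gt (hw k)), mul_one]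
  have hS : ∑ k, ∑ j, A k j * w j / w k = (n : ℝ) * r := by
    simp [hSrow, Finset.sum_const, Finset.card_univ, mul_comm]
  have hswap : ∑ k : Fin n, ∑ j : Fin n, A j k * w k / w j = (n : ℝ) * r := by
    rw [Finset.sum_comm]; exact hS
  have hpair : ∀ k j : Fin n, (2 : ℝ) ≤ A k j * w j / w k + A j k * w k / w j := by
    intro k j
    have hx : 0 < A k j * w j / w k := div_pos (mul_pos (hpos k j) (hw j)) (hw k)
    have hy : 0 < A j k * w k / w j := div_pos (mul_pos (hpos j k) (hw k)) (hw j)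
    have hne : A j k * w k * w j ≠ 0 :=
      mul_ne_zero (mul_ne_zero (ne_of_gt (hpos j k)) (ne_of_gt (hw k))) (ne_of_gt (hw j))
    have hxy : (A k j * w j / w k) * (A j k * w k / w j) = 1 := by
      rw [hrec k j]
      field_simp
      field_simp [(hpos j k).ne', (hw j).ne', (hw k).ne']
    nlinarith [sq_nonneg (A k j * w j / w k - 1)]
  have hge : (n : ℝ) ≤ r := by
    have h3 : ∑ k : Fin n, ∑ j : Fin n, (2 : ℝ) ≤
        ∑ k : Fin n, ∑ j : Fin n, (A k j * w j / w k + A j k * w k / w j) :=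
      Finset.sum_le_sum fun k _ => Finset.sum_le_sum fun j _ => hpair k j
    have hlhs : ∑ k : Fin n, ∑ j : Fin n, (2 : ℝ) = (n : ℝ) * ((n : ℝ) * 2) := by
      simp [Finset.sum_const, Finset.card_univ, mul_comm]
    have hrhs : ∑ k : Fin n, ∑ j : Fin n, (A k j * w j / w k + A j k * w k / w j)
        = (n : ℝ) * r + (n : ℝ) * r := by
      calc ∑ k : Fin n, ∑ j : Fin n, (A k j * w j / w k + A j k * w k / w j)
          = ∑ k : Fin n, (∑ j : Fin n, A k j * w j / w k + ∑ j : Fin n, A j k * w k / w j) := by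
            simp [Finset.sum_add_distrib]
        _ = (∑ k : Fin n, ∑ j : Fin n, A k j * w j / w k)
            + ∑ k : Fin n, ∑ j : Fin n, A j k * w k / w j := Finset.sum_add_distrib
        _ = (n : ℝ) * r + (n : ℝ) * r := by rw [hS, hswap]
    rw [hlhs, hrhs] at h3
    have hn0 : (0 : ℝ) < (n : ℝ) := by exact_mod_cast (by omega : 0 < n)
    nlinarith
  -- r < n from the source
  have key : ∀ j, j ≠ i → A i j * w j < w i := by
    intro j hj
    have h2 := hin j
    rw [Edge] at h2
    push_neg at h2
    have h3 : w j / w i < A j i := h2 hj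
    have h4 : A j i * A i j = 1 := by
      rw [hrec j i]
      exact inv_mul_cancel₀ (ne_of_gt (hpos i j))
    have hwi := hw i
    have hwj := hw j
    have hA := hpos i j
    rw [div_lt_iff₀ hwi] at h3
    nlinarith [mul_lt_mul_of_pos_left h3 hA]
  have hne : (Finset.univ.erase i).Nonempty := by
    rw [← Finset.card_pos, Finset.card_erase_of_mem (Finset.mem_univ i), Finset.card_univ,
      Fintype.card_fin]
    omega
  have hsum : ∑ j ∈ Finset.univ.erase i, A i j * w j < ∑ j ∈ Finset.univ.erase i, w i :=
    Finset.sum_lt_sum_of_nonempty hne fun j hj => key j (Finset.ne_of_mem_erase hj)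
  have hcard : (Finset.univ.erase i).card = n - 1 := by
    rw [Finset.card_erase_of_mem (Finset.mem_univ i), Finset.card_univ, Fintype.card_fin]
  have hrhs2 : ∑ j ∈ Finset.univ.erase i, w i = ((n : ℝ) - 1) * w i := by
    rw [Finset.sum_const, hcard, nsmul_eq_mul]
    congr 1
    have : (1 : ℕ) ≤ n := by omega
    push_cast [Nat.cast_sub this]
    ring
  have hsplit : ∑ j, A i j * w j = A i i * w i + ∑ j ∈ Finset.univ.erase i, A i j * w j :=
    (Finset.add_sum_erase _ _ (Finset.mem_univ i)).symm
  have hlt : r * w i < (n : ℝ) * w i := by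
    rw [← hrow i, hsplit, hAdiag i, one_mul]
    calc w i + ∑ j ∈ Finset.univ.erase i, A i j * w j
        < w i + ((n : ℝ) - 1) * w i := by rw [← hrhs2]; linarith
      _ = (n : ℝ) * w i := by ring
  have : r < (n : ℝ) := lt_of_mul_lt_mul_right hlt (le_of_lt (hw i))
  linarith
end

section
/- Let B ∈ PC_{n+1} be an extension of a reciprocal matrix A ∈ PC_n (i.e., B with its last row and column removed equals A), with n+1 ≥ 3, and let w be the Perron eigenvector of B. Then the digraph G_{B,w} has no source vertex. -/
/-- Conjecture 1: for an extension `B ∈ PC_{n+1}` of a reciprocal matrix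
`A ∈ PC_n` (with `n + 1 ≥ 3`) and the Perron eigenvector `w` of `B`, the digraph
`G_{B,w}` has no source vertex. -/
theorem extension_no_source (n : ℕ) (hn : 3 ≤ n + 1)
    (A : Matrix (Fin n) (Fin n) ℝ)
    (hApos : ∀ i j, 0 < A i j)
    (hArec : ∀ i j, A i j = (A j i)⁻¹)
    (B : Matrix (Fin (n + 1)) (Fin (n + 1)) ℝ)
    (hBpos : ∀ i j, 0 < B i j)
    (hBrec : ∀ i j, B i j = (B j i)⁻¹)
    (hext : B.submatrix Fin.castSucc Fin.castSucc = A)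
    (r : ℝ) (w : Fin (n + 1) → ℝ) (hw : ∀ i, 0 < w i)
    (heig : B.mulVec w = r • w) :
    ¬ ∃ i : Fin (n + 1),
        (∀ j : Fin (n + 1), j ≠ i → Edge B w i j) ∧ (∀ j : Fin (n + 1), ¬ Edge B w j i) := by
  rintro ⟨i, _hout, hin⟩
  have hwne : ∀ j, w j ≠ 0 := fun j => ne_of_gt (hw j)
  have hBne : ∀ j k, B j k ≠ 0 := fun j k => ne_of_gt (hBpos j k)
  have hBmul : ∀ j k, B j k * B k j = 1 := by
    intro j k; rw [hBrec j k]; exact inv_mul_cancel₀ (hBne k j)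
  have hBdiag : ∀ j, B j j = 1 := by
    intro j
    have h := hBmul j j
    have := hBpos j j
    nlinarith
  set c : Fin (n + 1) → Fin (n + 1) → ℝ := fun j k => B j k * w k / w j with hc
  have hcpos : ∀ j k, 0 < c j k := fun j k => by
    simp only [hc]; exact div_pos (mul_pos (hBpos j k) (hw k)) (hw j)
  have hkey : ∀ j, ∑ k, B j k * w k = r * w j := by
    intro j
    have := congrFun heig j
    simpa [Matrix.mulVec, dotProduct] using this
  have hsum : ∀ j, ∑ k, c j k = r := by
    intro j
    simp only [hc]
    rw [← Finset.sum_div, hkey j, mul_div_assoc, div_self (hwne j), mul_one]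
  have hcmul : ∀ j k, c j k * c k j = 1 := by
    intro j k
    simp only [hc]
    field_simp [hwne j, hwne k]
    linear_combination hBmul j k
  have hpair : ∀ j k, 2 ≤ c j k + c k j := by
    intro j k
    nlinarith [hcmul j k, hcpos j k, hcpos k j,
      mul_nonneg (sq_nonneg (c j k - 1)) (le_of_lt (hcpos k j))]
  -- the sum of all entries of `c` is `(n+1) * r`, and also at least `(n+1)^2`
  have h1 : ∑ j : Fin (n + 1), ∑ k : Fin (n + 1), c j k = (n + 1 : ℝ) * r := by
    simp [hsum, Finset.card_univ, mul_comm]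
  have h2 : ∑ j : Fin (n + 1), ∑ k : Fin (n + 1), c k j = (n + 1 : ℝ) * r := by
    rw [Finset.sum_comm]; exact h1
  have hge : (n + 1 : ℝ) ≤ r := by
    have hb : ∑ j : Fin (n + 1), ∑ k : Fin (n + 1), (2 : ℝ)
        ≤ ∑ j : Fin (n + 1), ∑ k : Fin (n + 1), (c j k + c k j) :=
      Finset.sum_le_sum fun j _ => Finset.sum_le_sum fun k _ => hpair j k
    have heq : ∑ j : Fin (n + 1), ∑ k : Fin (n + 1), (c j k + c k j)
        = 2 * ((n + 1 : ℝ) * r) := by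
      simp only [Finset.sum_add_distrib, h1, h2]; ring
    have hcn : ∑ _j : Fin (n + 1), ∑ _k : Fin (n + 1), (2 : ℝ)
        = 2 * (n + 1 : ℝ) * (n + 1 : ℝ) := by
      simp [Finset.card_univ]
      push_cast
      ring
    rw [heq, hcn] at hb
    have hm : (0 : ℝ) < (n + 1 : ℝ) := by positivity
    nlinarith
  -- since `i` is a source, row `i` of `c` has all off-diagonal entries `< 1`
  have hstrict : ∀ k, k ≠ i → c i k < 1 := by
    intro k hk
    have h := hin k
    rw [Edge] at h
    push_neg at h
    have h2 := h hk
    rw [hBrec k i] at h2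
    have h3 := (div_lt_iff₀ (hw i)).1 h2
    simp only [hc]
    rw [div_lt_one (hw i)]
    nlinarith [mul_pos (hBpos i k) (sub_pos.2 h3), mul_inv_cancel₀ (hBne i k), hw i]
  have hlt : r < (n + 1 : ℝ) := by
    haveI : Nontrivial (Fin (n + 1)) := Fin.nontrivial_iff_two_le.mpr (by omega)
    obtain ⟨j, hj⟩ := exists_ne i
    have hle : ∀ k ∈ Finset.univ, c i k ≤ (1 : ℝ) := by
      intro k _
      by_cases hki : k = i
      · subst hki
        simp only [hc]
        rw [hBdiag, one_mul, div_self (hwne k)]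
      · exact le_of_lt (hstrict k hki)
    have hlt' := Finset.sum_lt_sum hle ⟨j, Finset.mem_univ j, hstrict j hj⟩
    rw [hsum i] at hlt'
    have : ∑ _k : Fin (n + 1), (1 : ℝ) = (n + 1 : ℝ) := by
      simp [Finset.card_univ]
    linarith [this ▸ hlt']
  linarith
end

section
/- Let n ≥ 5 and Z_n(x,y,z,a) be the reciprocal matrix that equals the all-ones matrix except entries (1,n-1)=y, (1,n)=x, (2,n-1)=a, (2,n)=z and their reciprocals (n-1,1)=1/y, (n,1)=1/x, (n-1,2)=1/a, (n,2)=1/z, with x,y,z,a > 0. If w is the Perron eigenvector of Z_n(x,y,z,a) with eigenvalue r, then w_j = w_3 for all 3 ≤ j ≤ n-2. -/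
/-- The reciprocal matrix `Z_n(x,y,z,a)`: all entries equal to one except
(in 1-based indexing) `(1,n-1) = y`, `(1,n) = x`, `(2,n-1) = a`, `(2,n) = z`
and the reciprocals at the transposed positions. -/
noncomputable def Zmat (n : ℕ) (x y z a : ℝ) : Matrix (Fin n) (Fin n) ℝ :=
  fun i j =>
    if i.val = 0 ∧ j.val = n - 2 then y
    else if i.val = 0 ∧ j.val = n - 1 then x
    else if i.val = 1 ∧ j.val = n - 2 then a
    else if i.val = 1 ∧ j.val = n - 1 then z
    else if i.val = n - 2 ∧ j.val = 0 then y⁻¹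
    else if i.val = n - 1 ∧ j.val = 0 then x⁻¹
    else if i.val = n - 2 ∧ j.val = 1 then a⁻¹
    else if i.val = n - 1 ∧ j.val = 1 then z⁻¹
    else 1

/-- the Perron eigenvector of `Z_n(x,y,z,a)` (`n ≥ 5`) satisfies
`w_j = w_3` for all `3 ≤ j ≤ n-2` (1-based indexing). -/
theorem zmat_middle_components_eq (n : ℕ) (hn : 5 ≤ n) (x y z a : ℝ)
    (hx : 0 < x) (hy : 0 < y) (hz : 0 < z) (ha : 0 < a)
    (r : ℝ) (w : Fin n → ℝ) (hw : ∀ i, 0 < w i)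
    (heig : (Zmat n x y z a).mulVec w = r • w)
    (j : ℕ) (hj3 : 3 ≤ j) (hjn : j ≤ n - 2) :
    w ⟨j - 1, by omega⟩ = w ⟨2, by omega⟩ := by
  have key : ∀ i : Fin n, 2 ≤ i.val → i.val ≤ n - 3 → r * w i = ∑ k, w k := by
    intro i h1 h2
    have hrow := congrFun heig i
    simp only [Matrix.mulVec, dotProduct, Pi.smul_apply, smul_eq_mul] at hrow
    rw [← hrow]
    refine Finset.sum_congr rfl fun k _ => ?_
    have hZ : Zmat n x y z a i k = 1 := by
      unfold Zmat
      split_ifs <;> first | rfl | omega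
    rw [hZ, one_mul]
  have hS : 0 < ∑ k, w k :=
    Finset.sum_pos (fun k _ => hw k) ⟨⟨0, by omega⟩, Finset.mem_univ _⟩
  have h1 : r * w ⟨j - 1, by omega⟩ = ∑ k, w k := key _ (by simp; omega) (by simp; omega)
  have h2 : r * w ⟨2, by omega⟩ = ∑ k, w k := key _ (by simp) (by simp; omega)
  have hr : r ≠ 0 := by
    intro h; rw [h, zero_mul] at h2; exact hS.ne h2
  have := h1.trans h2.symm
  exact mul_left_cancel₀ hr this
end

section
/- Let n ≥ 5, Z_n(x,y,z,a) be the 4-perturbed reciprocal matrix with x,y,z,a > 0, and w its Perron eigenvector. If a ≤ y and z ≤ x then w_1 ≥ w_2, i.e., the edge (1,2) is in G_{Z_n(x,y,z,a),w}. -/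
/-- if `a ≤ y` and `z ≤ x` then `w_1 ≥ w_2`, i.e. edge (1,2) is in
`G_{Z_n(x,y,z,a),w}`. -/
theorem zmat_edge_one_two (n : ℕ) (hn : 5 ≤ n) (x y z a : ℝ)
    (hx : 0 < x) (hy : 0 < y) (hz : 0 < z) (ha : 0 < a)
    (r : ℝ) (w : Fin n → ℝ) (hw : ∀ i, 0 < w i)
    (heig : (Zmat n x y z a).mulVec w = r • w)
    (hay : a ≤ y) (hzx : z ≤ x) :
    w ⟨1, by omega⟩ ≤ w ⟨0, by omega⟩ := by
  have hZ0 : ∀ j : Fin n, Zmat n x y z a ⟨0, by omega⟩ j =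
      (if j.val = n - 2 then y else if j.val = n - 1 then x else 1) := by
    rintro ⟨jv, hj⟩
    by_cases h2 : jv = n - 2
    · simp [Zmat, h2, show ¬(0 = n - 2) from by omega, show n - 2 ≠ n - 1 from by omega]
    · by_cases h1 : jv = n - 1
      · simp [Zmat, h1, h2, show ¬(0 = n - 2) from by omega, show ¬(0 = n - 1) from by omega,
          show n - 1 ≠ n - 2 from by omega]
      · simp [Zmat, h1, h2, show ¬(0 = n - 2) from by omega, show ¬(0 = n - 1) from by omega]
  have hZ1 : ∀ j : Fin n, Zmat n x y z a ⟨1, by omega⟩ j =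
      (if j.val = n - 2 then a else if j.val = n - 1 then z else 1) := by
    rintro ⟨jv, hj⟩
    by_cases h2 : jv = n - 2
    · simp [Zmat, h2, show ¬(1 = n - 2) from by omega, show n - 2 ≠ n - 1 from by omega]
    · by_cases h1 : jv = n - 1
      · simp [Zmat, h1, h2, show ¬(1 = n - 2) from by omega, show ¬(1 = n - 1) from by omega,
          show n - 1 ≠ n - 2 from by omega]
      · simp [Zmat, h1, h2, show ¬(1 = n - 2) from by omega, show ¬(1 = n - 1) from by omega]
  have h0 := congrFun heig ⟨0, by omega⟩
  have h1 := congrFun heig ⟨1, by omega⟩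
  simp only [Matrix.mulVec, dotProduct, Pi.smul_apply, smul_eq_mul] at h0 h1
  have hZ0pos : ∀ j : Fin n, 0 < Zmat n x y z a ⟨0, by omega⟩ j := by
    intro j
    rw [hZ0 j]
    split_ifs <;> first | exact hy | exact hx | norm_num
  have hle : ∀ j : Fin n, Zmat n x y z a ⟨1, by omega⟩ j ≤ Zmat n x y z a ⟨0, by omega⟩ j := by
    intro j
    rw [hZ0 j, hZ1 j]
    split_ifs <;> linarith
  have hsumpos : 0 < r * w ⟨0, by omega⟩ := by
    rw [← h0]
    exact Finset.sum_pos (fun j _ => mul_pos (hZ0pos j) (hw j)) ⟨⟨0, by omega⟩, Finset.mem_univ _⟩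
  have hrpos : 0 < r := by
    by_contra hr
    push_neg at hr
    nlinarith [hw (⟨0, by omega⟩ : Fin n)]
  have hsum : r * w ⟨1, by omega⟩ ≤ r * w ⟨0, by omega⟩ := by
    rw [← h0, ← h1]
    exact Finset.sum_le_sum fun j _ => mul_le_mul_of_nonneg_right (hle j) (hw j).le
  exact le_of_mul_le_mul_left hsum hrpos
end

section
/- Let n ≥ 5, Z_n(x,y,z,a) be the 4-perturbed reciprocal matrix with x,y,z,a > 0 satisfying x ≤ min{a,y,z}, and suppose 1 ≤ x ≤ z ≤ a ≤ y. Then the Perron eigenvector w of Z_n(x,y,z,a) is efficient for Z_n(x,y,z,a), i.e., the digraph G_{Z_n(x,y,z,a),w} is strongly connected. -/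
section Aux

lemma sum_eq_two_terms {n : ℕ} (g : Fin n → ℝ) (p q : Fin n) (hpq : p ≠ q)
    (h : ∀ j, j ≠ p → j ≠ q → g j = 0) : ∑ j, g j = g p + g q := by
  rw [← Finset.sum_pair hpq]
  refine (Finset.sum_subset (Finset.subset_univ _) ?_).symm
  intro j _ hj
  simp only [Finset.mem_insert, Finset.mem_singleton, not_or] at hj
  exact h j hj.1 hj.2

lemma two_le_add_inv {u v : ℝ} (hu : 0 < u) (hv : 0 < v) (huv : u * v = 1) :
    2 ≤ u + v := by nlinarith [sq_nonneg (u - 1), hv.le]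

/-- For a positive reciprocal matrix with positive eigenvector, the eigenvalue is ≥ n. -/
lemma perron_ge {n : ℕ} (A : Matrix (Fin n) (Fin n) ℝ)
    (hpos : ∀ i j, 0 < A i j) (hrec : ∀ i j, A i j * A j i = 1)
    (hn : 0 < n) (r : ℝ) (w : Fin n → ℝ) (hw : ∀ i, 0 < w i)
    (heig : A.mulVec w = r • w) : (n : ℝ) ≤ r := by
  have hrow : ∀ i, ∑ j, A i j * w j = r * w i := by
    intro i
    have := congrFun heig i
    simpa [Matrix.mulVec, dotProduct, mul_comm] using this
  set f : Fin n → Fin n → ℝ := fun i j => A i j * w j / w i with hf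
  have hfr : ∀ i, ∑ j, f i j = r := by
    intro i
    rw [← Finset.sum_div, hrow i, mul_div_assoc, div_self (hw i).ne', mul_one]
  have hsum : ∑ i, ∑ j, f i j = n * r := by
    simp [hfr, Finset.sum_const, Finset.card_univ, mul_comm]
  have hpair : ∀ i j, 2 ≤ f i j + f j i := by
    intro i j
    apply two_le_add_inv
    · exact div_pos (mul_pos (hpos i j) (hw j)) (hw i)
    · exact div_pos (mul_pos (hpos j i) (hw i)) (hw j)
    · simp only [hf]
      rw [div_mul_div_comm, div_eq_one_iff_eq (mul_ne_zero (hw i).ne' (hw j).ne')]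
      linear_combination (w i * w j) * hrec i j
  have hlb : (2 : ℝ) * (n * n) ≤ ∑ i, ∑ j, (f i j + f j i) := by
    calc (2:ℝ) * (n*n) = ∑ _i : Fin n, ∑ _j : Fin n, (2:ℝ) := by
          simp [Finset.sum_const, Finset.card_univ]; ring
    _ ≤ _ := by
          apply Finset.sum_le_sum; intro i _; apply Finset.sum_le_sum; intro j _
          exact hpair i j
  have hswap : ∑ i, ∑ j, f j i = ∑ i, ∑ j, f i j := Finset.sum_comm
  have : (2:ℝ) * (n*n) ≤ 2 * (n * r) := by
    rw [← hsum]
    calc (2:ℝ)*(n*n) ≤ ∑ i, ∑ j, (f i j + f j i) := hlb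
      _ = ∑ i, ∑ j, f i j + ∑ i, ∑ j, f j i := by
          rw [← Finset.sum_add_distrib]
          congr 1; ext i; rw [Finset.sum_add_distrib]
      _ = 2 * ∑ i, ∑ j, f i j := by rw [hswap]; ring
  have hn' : (0:ℝ) < n := by exact_mod_cast hn
  nlinarith

end Aux

section ZmatLemmas
variable {n : ℕ} {x y z a : ℝ}

lemma zmat_pos (hx : 0 < x) (hy : 0 < y) (hz : 0 < z) (ha : 0 < a) (i j : Fin n) :
    0 < Zmat n x y z a i j := by
  unfold Zmat
  split_ifs <;> positivity

set_option maxHeartbeats 1000000 in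
lemma zmat_recip (hn : 5 ≤ n) (hx : 0 < x) (hy : 0 < y) (hz : 0 < z) (ha : 0 < a)
    (i j : Fin n) : Zmat n x y z a i j * Zmat n x y z a j i = 1 := by
  have hi := i.isLt
  have hj := j.isLt
  by_cases hi0 : i.val = 0 <;> by_cases hi1 : i.val = 1 <;>
    by_cases hip : i.val = n-2 <;> by_cases hiq : i.val = n-1 <;>
    first
      | (exfalso; omega)
      | (by_cases hj0 : j.val = 0 <;> by_cases hj1 : j.val = 1 <;>
          by_cases hjp : j.val = n-2 <;> by_cases hjq : j.val = n-1 <;>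
          first
            | (exfalso; omega)
            | simp_all [Zmat, mul_inv_cancel₀, inv_mul_cancel₀,
                hx.ne', hy.ne', hz.ne', ha.ne',
                (by omega : ¬((0:ℕ) = n-2)), (by omega : ¬((0:ℕ) = n-1)),
                (by omega : ¬((1:ℕ) = n-2)), (by omega : ¬((1:ℕ) = n-1)),
                (by omega : ¬(n-2 = n-1)), (by omega : ¬(n-1 = n-2)),
                (by omega : ¬(n-2 = (0:ℕ))), (by omega : ¬(n-1 = (0:ℕ))),
                (by omega : ¬(n-2 = (1:ℕ))), (by omega : ¬(n-1 = (1:ℕ)))])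

-- entry lemmas
lemma zmat_0p (hn : 5 ≤ n) {i j : Fin n} (hi : i.val = 0) (hj : j.val = n-2) :
    Zmat n x y z a i j = y := by
  unfold Zmat; split_ifs <;> first | rfl | (exfalso; omega)

lemma zmat_0q (hn : 5 ≤ n) {i j : Fin n} (hi : i.val = 0) (hj : j.val = n-1) :
    Zmat n x y z a i j = x := by
  unfold Zmat; split_ifs <;> first | rfl | (exfalso; omega)

lemma zmat_1p (hn : 5 ≤ n) {i j : Fin n} (hi : i.val = 1) (hj : j.val = n-2) :
    Zmat n x y z a i j = a := by
  unfold Zmat; split_ifs <;> first | rfl | (exfalso; omega)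

lemma zmat_1q (hn : 5 ≤ n) {i j : Fin n} (hi : i.val = 1) (hj : j.val = n-1) :
    Zmat n x y z a i j = z := by
  unfold Zmat; split_ifs <;> first | rfl | (exfalso; omega)

lemma zmat_p0 (hn : 5 ≤ n) {i j : Fin n} (hi : i.val = n-2) (hj : j.val = 0) :
    Zmat n x y z a i j = y⁻¹ := by
  unfold Zmat; split_ifs <;> first | rfl | (exfalso; omega)

lemma zmat_q0 (hn : 5 ≤ n) {i j : Fin n} (hi : i.val = n-1) (hj : j.val = 0) :
    Zmat n x y z a i j = x⁻¹ := by
  unfold Zmat; split_ifs <;> first | rfl | (exfalso; omega)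

lemma zmat_p1 (hn : 5 ≤ n) {i j : Fin n} (hi : i.val = n-2) (hj : j.val = 1) :
    Zmat n x y z a i j = a⁻¹ := by
  unfold Zmat; split_ifs <;> first | rfl | (exfalso; omega)

lemma zmat_q1 (hn : 5 ≤ n) {i j : Fin n} (hi : i.val = n-1) (hj : j.val = 1) :
    Zmat n x y z a i j = z⁻¹ := by
  unfold Zmat; split_ifs <;> first | rfl | (exfalso; omega)

lemma zmat_row0_one (hn : 5 ≤ n) {i j : Fin n} (hi : i.val = 0)
    (h1 : j.val ≠ n-2) (h2 : j.val ≠ n-1) : Zmat n x y z a i j = 1 := by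
  unfold Zmat; split_ifs <;> first | rfl | (exfalso; omega)

lemma zmat_row1_one (hn : 5 ≤ n) {i j : Fin n} (hi : i.val = 1)
    (h1 : j.val ≠ n-2) (h2 : j.val ≠ n-1) : Zmat n x y z a i j = 1 := by
  unfold Zmat; split_ifs <;> first | rfl | (exfalso; omega)

lemma zmat_rowp_one (hn : 5 ≤ n) {i j : Fin n} (hi : i.val = n-2)
    (h1 : j.val ≠ 0) (h2 : j.val ≠ 1) : Zmat n x y z a i j = 1 := by
  unfold Zmat; split_ifs <;> first | rfl | (exfalso; omega)

lemma zmat_rowq_one (hn : 5 ≤ n) {i j : Fin n} (hi : i.val = n-1)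
    (h1 : j.val ≠ 0) (h2 : j.val ≠ 1) : Zmat n x y z a i j = 1 := by
  unfold Zmat; split_ifs <;> first | rfl | (exfalso; omega)

lemma zmat_rowmid_one (hn : 5 ≤ n) {i : Fin n} (h0 : i.val ≠ 0) (h1 : i.val ≠ 1)
    (hp : i.val ≠ n-2) (hq : i.val ≠ n-1) (j : Fin n) : Zmat n x y z a i j = 1 := by
  unfold Zmat; split_ifs <;> first | rfl | (exfalso; omega)

end ZmatLemmas

set_option maxHeartbeats 4000000 in
/-- if `x ≤ min {a, y, z}` and `1 ≤ x ≤ z ≤ a ≤ y`, then the Perron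
eigenvector `w` of `Z_n(x,y,z,a)` is efficient, i.e. `G_{Z_n(x,y,z,a),w}` is
strongly connected. -/
theorem zmat_perron_efficient (n : ℕ) (hn : 5 ≤ n) (x y z a : ℝ)
    (hx : 0 < x) (hy : 0 < y) (hz : 0 < z) (ha : 0 < a)
    (r : ℝ) (w : Fin n → ℝ) (hw : ∀ i, 0 < w i)
    (heig : (Zmat n x y z a).mulVec w = r • w)
    (hxa : x ≤ a) (hxy : x ≤ y) (hxz : x ≤ z)
    (h1x : 1 ≤ x) (hza : z ≤ a) (hay : a ≤ y) :
    ∀ i j : Fin n, Relation.ReflTransGen (Edge (Zmat n x y z a) w) i j := by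
  have h1z : 1 ≤ z := le_trans h1x hxz
  have h1a : 1 ≤ a := le_trans h1z hza
  have h1y : 1 ≤ y := le_trans h1a hay
  -- row equations
  have e : ∀ i, ∑ j, Zmat n x y z a i j * w j = r * w i := by
    intro i
    have := congrFun heig i
    simpa [Matrix.mulVec, dotProduct, mul_comm] using this
  -- distinguished indices
  obtain ⟨i0, hi0⟩ : ∃ i : Fin n, i.val = 0 := ⟨⟨0, by omega⟩, rfl⟩
  obtain ⟨i1, hi1⟩ : ∃ i : Fin n, i.val = 1 := ⟨⟨1, by omega⟩, rfl⟩
  obtain ⟨i2, hi2⟩ : ∃ i : Fin n, i.val = 2 := ⟨⟨2, by omega⟩, rfl⟩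
  obtain ⟨p, hp⟩ : ∃ i : Fin n, i.val = n-2 := ⟨⟨n-2, by omega⟩, rfl⟩
  obtain ⟨q, hq⟩ : ∃ i : Fin n, i.val = n-1 := ⟨⟨n-1, by omega⟩, rfl⟩
  set S : ℝ := ∑ j, w j with hS
  have hSpos : 0 < S := Finset.sum_pos (fun i _ => hw i) ⟨i0, Finset.mem_univ _⟩
  -- middle rows
  have hmid : ∀ j : Fin n, j.val ≠ 0 → j.val ≠ 1 → j.val ≠ n-2 → j.val ≠ n-1 →
      r * w j = S := by
    intro j h0 h1 h2 h3
    rw [← e j]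
    exact Finset.sum_congr rfl fun k _ => by
      rw [zmat_rowmid_one hn h0 h1 h2 h3, one_mul]
  have hmid2 : r * w i2 = S := hmid i2 (by omega) (by omega) (by omega) (by omega)
  have hr : 0 < r := by
    by_contra h
    push_neg at h
    nlinarith [hw i2]
  -- row sum computations
  have hpq : p ≠ q := fun h => by rw [h, hq] at hp; omega
  have hrow_split : ∀ i : Fin n, (∀ j, j ≠ p → j ≠ q → Zmat n x y z a i j = 1) →
      r * w i = S + (Zmat n x y z a i p - 1) * w p + (Zmat n x y z a i q - 1) * w q := by
    intro i hone
    have h1 : ∑ j, Zmat n x y z a i j * w j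
        = ∑ j, (w j + (Zmat n x y z a i j - 1) * w j) :=
      Finset.sum_congr rfl fun j _ => by ring
    have h2 : ∑ j, (w j + (Zmat n x y z a i j - 1) * w j)
        = S + ∑ j, (Zmat n x y z a i j - 1) * w j := by
      rw [Finset.sum_add_distrib]
    have h3 : ∑ j, (Zmat n x y z a i j - 1) * w j
        = (Zmat n x y z a i p - 1) * w p + (Zmat n x y z a i q - 1) * w q := by
      apply sum_eq_two_terms _ p q hpq
      intro j hjp hjq
      rw [hone j hjp hjq]; ring
    rw [← e i, h1, h2, h3]; ring
  have hcol_split : ∀ i : Fin n, (∀ j, j ≠ i0 → j ≠ i1 → Zmat n x y z a i j = 1) →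
      r * w i = S + (Zmat n x y z a i i0 - 1) * w i0 + (Zmat n x y z a i i1 - 1) * w i1 := by
    intro i hone
    have h01 : i0 ≠ i1 := fun h => by rw [h, hi1] at hi0; omega
    have h1 : ∑ j, Zmat n x y z a i j * w j
        = ∑ j, (w j + (Zmat n x y z a i j - 1) * w j) :=
      Finset.sum_congr rfl fun j _ => by ring
    have h3 : ∑ j, (Zmat n x y z a i j - 1) * w j
        = (Zmat n x y z a i i0 - 1) * w i0 + (Zmat n x y z a i i1 - 1) * w i1 := by
      apply sum_eq_two_terms _ i0 i1 h01
      intro j hj0 hj1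
      rw [hone j hj0 hj1]; ring
    rw [← e i, h1, Finset.sum_add_distrib, h3]; ring
  have neval : ∀ (j : Fin n) (m : ℕ), j.val ≠ m → ∀ k : Fin n, k.val = m → j ≠ k :=
    fun j m hjm k hk h => by rw [h, hk] at hjm; exact hjm rfl
  have hR0 : r * w i0 = S + (y - 1) * w p + (x - 1) * w q := by
    have := hrow_split i0 (fun j hjp hjq => zmat_row0_one hn hi0
      (fun h => hjp (Fin.ext (h.trans hp.symm))) (fun h => hjq (Fin.ext (h.trans hq.symm))))
    rwa [zmat_0p hn hi0 hp, zmat_0q hn hi0 hq] at this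
  have hR1 : r * w i1 = S + (a - 1) * w p + (z - 1) * w q := by
    have := hrow_split i1 (fun j hjp hjq => zmat_row1_one hn hi1
      (fun h => hjp (Fin.ext (h.trans hp.symm))) (fun h => hjq (Fin.ext (h.trans hq.symm))))
    rwa [zmat_1p hn hi1 hp, zmat_1q hn hi1 hq] at this
  have hRp : r * w p = S + (y⁻¹ - 1) * w i0 + (a⁻¹ - 1) * w i1 := by
    have := hcol_split p (fun j hj0 hj1 => zmat_rowp_one hn hp
      (fun h => hj0 (Fin.ext (h.trans hi0.symm))) (fun h => hj1 (Fin.ext (h.trans hi1.symm))))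
    rwa [zmat_p0 hn hp hi0, zmat_p1 hn hp hi1] at this
  have hRq : r * w q = S + (x⁻¹ - 1) * w i0 + (z⁻¹ - 1) * w i1 := by
    have := hcol_split q (fun j hj0 hj1 => zmat_rowq_one hn hq
      (fun h => hj0 (Fin.ext (h.trans hi0.symm))) (fun h => hj1 (Fin.ext (h.trans hi1.symm))))
    rwa [zmat_q0 hn hq hi0, zmat_q1 hn hq hi1] at this
  -- cleared forms
  have hRp' : y * a * (r * w p) = y * a * S + a * (1 - y) * w i0 + y * (1 - a) * w i1 := by
    have h1 : y * y⁻¹ = 1 := mul_inv_cancel₀ hy.ne'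
    have h2 : a * a⁻¹ = 1 := mul_inv_cancel₀ ha.ne'
    rw [hRp]
    linear_combination (a * w i0) * h1 + (y * w i1) * h2
  have hRq' : x * z * (r * w q) = x * z * S + z * (1 - x) * w i0 + x * (1 - z) * w i1 := by
    have h1 : x * x⁻¹ = 1 := mul_inv_cancel₀ hx.ne'
    have h2 : z * z⁻¹ = 1 := mul_inv_cancel₀ hz.ne'
    rw [hRq]
    linear_combination (z * w i0) * h1 + (x * w i1) * h2
  -- partial sum bound
  have hS4 : w i0 + w i1 + w p + w q ≤ S := by
    have h01 : i0 ≠ i1 := fun h => by rw [h, hi1] at hi0; omega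
    have h0p : i0 ≠ p := fun h => by rw [h, hp] at hi0; omega
    have h0q : i0 ≠ q := fun h => by rw [h, hq] at hi0; omega
    have h1p : i1 ≠ p := fun h => by rw [h, hp] at hi1; omega
    have h1q : i1 ≠ q := fun h => by rw [h, hq] at hi1; omega
    have hsum : ∑ j ∈ ({i0, i1, p, q} : Finset (Fin n)), w j
        = w i0 + w i1 + w p + w q := by
      rw [Finset.sum_insert (by simp [h01, h0p, h0q]),
        Finset.sum_insert (by simp [h1p, h1q]), Finset.sum_pair hpq]
      ring
    rw [← hsum]
    exact Finset.sum_le_sum_of_subset_of_nonneg (Finset.subset_univ _)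
      (fun j _ _ => (hw j).le)
  -- key inequalities
  have hW0ge : S ≤ r * w i0 := by
    nlinarith [mul_nonneg (by linarith : (0:ℝ) ≤ y - 1) (hw p).le,
      mul_nonneg (by linarith : (0:ℝ) ≤ x - 1) (hw q).le]
  have hW1ge : S ≤ r * w i1 := by
    nlinarith [mul_nonneg (by linarith : (0:ℝ) ≤ a - 1) (hw p).le,
      mul_nonneg (by linarith : (0:ℝ) ≤ z - 1) (hw q).le]
  have hWqle : r * w q ≤ S := by
    nlinarith [hRq', mul_pos hx hz,
      mul_nonneg (mul_nonneg hz.le (by linarith : (0:ℝ) ≤ x - 1)) (hw i0).le,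
      mul_nonneg (mul_nonneg hx.le (by linarith : (0:ℝ) ≤ z - 1)) (hw i1).le]
  have hWpq : w p ≤ w q := by
    have key : x * z * y * a * (r * (w q - w p))
        = a * z * (y - x) * w i0 + x * y * (a - z) * w i1 := by
      linear_combination (y * a) * hRq' - (x * z) * hRp'
    nlinarith [key, mul_pos (mul_pos (mul_pos (mul_pos hx hz) hy) ha) hr,
      mul_nonneg (mul_nonneg (mul_nonneg ha.le hz.le) (by linarith : (0:ℝ) ≤ y - x)) (hw i0).le,
      mul_nonneg (mul_nonneg (mul_nonneg hx.le hy.le) (by linarith : (0:ℝ) ≤ a - z)) (hw i1).le]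
  have hE4 : w i0 ≤ y * w p := by
    have key : a * (r * (y * w p - w i0))
        = a * (y - 1) * (S - (w i0 + w i1 + w p + w q))
          + (y - a) * w i1 + a * (y - x) * w q := by
      linear_combination hRp' - a * hR0
    nlinarith [key, mul_pos ha hr,
      mul_nonneg (mul_nonneg ha.le (by linarith : (0:ℝ) ≤ y - 1)) (by linarith : (0:ℝ) ≤ S - (w i0 + w i1 + w p + w q)),
      mul_nonneg (by linarith : (0:ℝ) ≤ y - a) (hw i1).le,
      mul_nonneg (mul_nonneg ha.le (by linarith : (0:ℝ) ≤ y - x)) (hw q).le]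
  -- edge helper for unit entries
  have edge1 : ∀ i j : Fin n, i ≠ j → Zmat n x y z a i j = 1 → w j ≤ w i →
      Edge (Zmat n x y z a) w i j := by
    intro i j hne h1 hle
    exact ⟨hne, by rw [h1]; exact (one_le_div (hw j)).2 hle⟩
  -- basic edges
  have edge_qp : Edge (Zmat n x y z a) w q p := by
    refine edge1 q p (fun h => by rw [h, hp] at hq; omega) ?_ hWpq
    exact zmat_rowq_one hn hq (by omega) (by omega)
  have edge_p0 : Edge (Zmat n x y z a) w p i0 := by
    refine ⟨fun h => by rw [h, hi0] at hp; omega, ?_⟩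
    rw [zmat_p0 hn hp hi0, inv_eq_one_div, div_le_div_iff₀ hy (hw i0)]
    nlinarith [hw p]
  have edge_mid_q : ∀ j : Fin n, j.val ≠ 0 → j.val ≠ 1 → j.val ≠ n-2 → j.val ≠ n-1 →
      Edge (Zmat n x y z a) w j q := by
    intro j h0 h1 h2 h3
    refine edge1 j q (fun h => by rw [h, hq] at h3; exact h3 rfl) ?_ ?_
    · exact zmat_rowmid_one hn h0 h1 h2 h3 q
    · have := hmid j h0 h1 h2 h3
      nlinarith
  have edge_0_mid : ∀ j : Fin n, j.val ≠ 0 → j.val ≠ 1 → j.val ≠ n-2 → j.val ≠ n-1 →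
      Edge (Zmat n x y z a) w i0 j := by
    intro j h0 h1 h2 h3
    refine edge1 i0 j (fun h => by rw [← h, hi0] at h0; exact h0 rfl) ?_ ?_
    · exact zmat_row0_one hn hi0 (by omega) (by omega)
    · have := hmid j h0 h1 h2 h3
      nlinarith
  have edge_1_mid : ∀ j : Fin n, j.val ≠ 0 → j.val ≠ 1 → j.val ≠ n-2 → j.val ≠ n-1 →
      Edge (Zmat n x y z a) w i1 j := by
    intro j h0 h1 h2 h3
    refine edge1 i1 j (fun h => by rw [← h, hi1] at h1; exact h1 rfl) ?_ ?_
    · exact zmat_row1_one hn hi1 (by omega) (by omega)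
    · have := hmid j h0 h1 h2 h3
      nlinarith
  have hmid2' : i2.val ≠ 0 ∧ i2.val ≠ 1 ∧ i2.val ≠ n-2 ∧ i2.val ≠ n-1 := by omega
  -- in-edge to i1 via the no-source theorem
  have hrge : (n : ℝ) ≤ r :=
    perron_ge _ (zmat_pos hx hy hz ha) (zmat_recip hn hx hy hz ha) (by omega) r w hw heig
  have hex : ∃ k, Edge (Zmat n x y z a) w k i1 := by
    by_contra hno
    push_neg at hno
    have hlt : ∀ k, k ≠ i1 → Zmat n x y z a i1 k * w k < w i1 := by
      intro k hk
      have h1 := hno k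
      simp only [Edge, not_and, not_le] at h1
      have h2 : w k / w i1 < Zmat n x y z a k i1 := h1 hk
      rw [div_lt_iff₀ (hw i1)] at h2
      have h4 := zmat_recip hn hx hy hz ha i1 k
      have h5 : 0 < Zmat n x y z a i1 k := zmat_pos hx hy hz ha i1 k
      calc Zmat n x y z a i1 k * w k
          < Zmat n x y z a i1 k * (Zmat n x y z a k i1 * w i1) := by
            exact mul_lt_mul_of_pos_left h2 h5
        _ = w i1 := by rw [← mul_assoc, h4, one_mul]
    have hone : Zmat n x y z a i1 i1 = 1 :=
      zmat_row1_one hn hi1 (by omega) (by omega)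
    have hsplit : ∑ k, Zmat n x y z a i1 k * w k
        = Zmat n x y z a i1 i1 * w i1 + ∑ k ∈ Finset.univ.erase i1, Zmat n x y z a i1 k * w k :=
      (Finset.add_sum_erase _ _ (Finset.mem_univ i1)).symm
    have hcard : (Finset.univ.erase i1).card = n - 1 := by
      rw [Finset.card_erase_of_mem (Finset.mem_univ _), Finset.card_univ, Fintype.card_fin]
    have hne : (Finset.univ.erase i1).Nonempty := by
      rw [← Finset.card_pos, hcard]; omega
    have hlt2 : ∑ k ∈ Finset.univ.erase i1, Zmat n x y z a i1 k * w k
        < ∑ _k ∈ Finset.univ.erase i1, w i1 :=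
      Finset.sum_lt_sum_of_nonempty hne (fun k hk => hlt k (Finset.ne_of_mem_erase hk))
    rw [Finset.sum_const, hcard, nsmul_eq_mul] at hlt2
    have hcast : ((n - 1 : ℕ) : ℝ) = (n : ℝ) - 1 := by
      rw [Nat.cast_sub (by omega)]; norm_num
    rw [hcast] at hlt2
    have hmain : r * w i1 < (n : ℝ) * w i1 := by
      rw [← e i1, hsplit, hone, one_mul]
      linarith
    nlinarith [hw i1]
  -- reachability
  set R := Relation.ReflTransGen (Edge (Zmat n x y z a) w) with hR
  have reach_to_0 : ∀ j : Fin n, R j i0 := by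
    intro j
    by_cases h0 : j.val = 0
    · have : j = i0 := Fin.ext (by omega)
      rw [this]
    · by_cases hqq : j.val = n-1
      · -- q → p → i0
        have hj : j = q := Fin.ext (by omega)
        rw [hj]
        exact Relation.ReflTransGen.head edge_qp (Relation.ReflTransGen.single edge_p0)
      · by_cases hpp : j.val = n-2
        · have hj : j = p := Fin.ext (by omega)
          rw [hj]
          exact Relation.ReflTransGen.single edge_p0
        · by_cases h1 : j.val = 1
          · -- i1 → i2 → q → p → i0
            have hj : j = i1 := Fin.ext (by omega)
            rw [hj]
            refine Relation.ReflTransGen.head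
              (edge_1_mid i2 hmid2'.1 hmid2'.2.1 hmid2'.2.2.1 hmid2'.2.2.2) ?_
            refine Relation.ReflTransGen.head
              (edge_mid_q i2 hmid2'.1 hmid2'.2.1 hmid2'.2.2.1 hmid2'.2.2.2) ?_
            exact Relation.ReflTransGen.head edge_qp (Relation.ReflTransGen.single edge_p0)
          · -- middle → q → p → i0
            refine Relation.ReflTransGen.head (edge_mid_q j h0 h1 hpp hqq) ?_
            exact Relation.ReflTransGen.head edge_qp (Relation.ReflTransGen.single edge_p0)
  have reach_from_0' : ∀ j : Fin n, j ≠ i1 → R i0 j := by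
    intro j hj1
    by_cases h0 : j.val = 0
    · have : j = i0 := Fin.ext (by omega)
      rw [this]
    · by_cases hqq : j.val = n-1
      · have hj : j = q := Fin.ext (by omega)
        rw [hj]
        exact Relation.ReflTransGen.head
          (edge_0_mid i2 hmid2'.1 hmid2'.2.1 hmid2'.2.2.1 hmid2'.2.2.2)
          (Relation.ReflTransGen.single
            (edge_mid_q i2 hmid2'.1 hmid2'.2.1 hmid2'.2.2.1 hmid2'.2.2.2))
      · by_cases hpp : j.val = n-2
        · have hj : j = p := Fin.ext (by omega)
          rw [hj]
          refine Relation.ReflTransGen.head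
            (edge_0_mid i2 hmid2'.1 hmid2'.2.1 hmid2'.2.2.1 hmid2'.2.2.2) ?_
          exact Relation.ReflTransGen.head
            (edge_mid_q i2 hmid2'.1 hmid2'.2.1 hmid2'.2.2.1 hmid2'.2.2.2)
            (Relation.ReflTransGen.single edge_qp)
        · by_cases h1 : j.val = 1
          · exact absurd (Fin.ext (by omega) : j = i1) hj1
          · exact Relation.ReflTransGen.single (edge_0_mid j h0 h1 hpp hqq)
  have reach_from_0 : ∀ j : Fin n, R i0 j := by
    intro j
    by_cases hj1 : j = i1
    · obtain ⟨k, hk⟩ := hex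
      rw [hj1]
      exact Relation.ReflTransGen.tail (reach_from_0' k hk.1) hk
    · exact reach_from_0' j hj1
  intro i j
  exact (reach_to_0 i).trans (reach_from_0 j)
end
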